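/- arXiv:1307.5141 — 2 statements merged into one kernel-verified Lean document; each statement's English description precedes it below -/
import Mathlib

section
/- With Q as defined (depending on the real constant C), there exist constants C₀ > 0, A > 0, and R > 0 such that for all C ≤ −C₀ and all (x,y) with x² + y² ≥ R², one has |Q(x,y)| ≥ A·(x² + y²)². -/
/-! The quartic part `-x⁴ - y⁴` dominates. Bounding sines and cosines by `1`, and splitting the
cubic terms by Young's inequality `2ab ≤ εa² + ε⁻¹b²`, every other term of `Q` is at most
`(x⁴ + y⁴) / 10 + O(x² + y² + 1)`; a sufficiently negative `C` absorbs the constant. -/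

noncomputable def Q (C x y : ℝ) : ℝ :=
  -x ^ 4 - y ^ 4 - 4 * x ^ 2 * y * Real.sin x * Real.sin y
  + x ^ 2 * (-8 * Real.cos y * Real.sin x - 2 * (Real.sin y) ^ 2 - 1)
  + 4 * x * y ^ 2 * Real.cos x * Real.cos y
  - 16 * x * y * Real.cos x * Real.sin y
  + 2 * x * Real.cos x * (-8 * Real.cos y - Real.sin x)
  + y ^ 2 * (-8 * Real.cos y * Real.sin x + 2 * (Real.sin x) ^ 2 - 3)
  + 2 * y * Real.sin y * (Real.cos y + 8 * Real.sin x)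
  + 16 * Real.cos y * Real.sin x + (Real.sin x) ^ 2 - (Real.sin y) ^ 2
  + 4 * C + 1

open Real

lemma two_mul_mul_mul_le_of_abs_le {p q u M ε : ℝ} (hε : 0 < ε) (hu : |u| ≤ M) :
    2 * p * q * u ≤ ε * p ^ 2 + ε⁻¹ * (M * q) ^ 2 := by
  have hu2 : u ^ 2 ≤ M ^ 2 := by simpa only [sq_abs] using pow_le_pow_left₀ (abs_nonneg u) hu 2
  have hqu : (q * u) ^ 2 ≤ (M * q) ^ 2 := by
    linarith [mul_le_mul_of_nonneg_left hu2 (sq_nonneg q)]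
  calc 2 * p * q * u = 2 * p * (q * u) := by ring
    _ ≤ ε * p ^ 2 + ε⁻¹ * (q * u) ^ 2 := two_mul_le_add_mul_sq hε
    _ ≤ ε * p ^ 2 + ε⁻¹ * (M * q) ^ 2 := by gcongr

lemma Q_le (C x y : ℝ) :
    Q C x y ≤ -(9 / 10) * (x ^ 4 + y ^ 4) + 57 * (x ^ 2 + y ^ 2) + 180 + 4 * C := by
  obtain ⟨hsx, hsx'⟩ := abs_le.mp (abs_sin_le_one x)
  obtain ⟨hcx, hcx'⟩ := abs_le.mp (abs_cos_le_one x)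
  obtain ⟨hsy, hsy'⟩ := abs_le.mp (abs_sin_le_one y)
  obtain ⟨hcy, hcy'⟩ := abs_le.mp (abs_cos_le_one y)
  have hx2y := two_mul_mul_mul_le_of_abs_le (p := x ^ 2) (q := y) (ε := 1 / 10) (by norm_num)
    (show |-2 * sin x * sin y| ≤ 2 from abs_le.mpr ⟨by nlinarith, by nlinarith⟩)
  have hxy2 := two_mul_mul_mul_le_of_abs_le (p := y ^ 2) (q := x) (ε := 1 / 10) (by norm_num)
    (show |2 * cos x * cos y| ≤ 2 from abs_le.mpr ⟨by nlinarith, by nlinarith⟩)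
  have hxy := two_mul_mul_mul_le_of_abs_le (p := x) (q := y) (ε := 8) (by norm_num)
    (show |-8 * cos x * sin y| ≤ 8 from abs_le.mpr ⟨by nlinarith, by nlinarith⟩)
  have hx := two_mul_mul_mul_le_of_abs_le (p := x) (q := 1) (ε := 1) one_pos
    (show |cos x * (-8 * cos y - sin x)| ≤ 9 from abs_le.mpr ⟨by nlinarith, by nlinarith⟩)
  have hy := two_mul_mul_mul_le_of_abs_le (p := y) (q := 1) (ε := 1) one_pos
    (show |sin y * (cos y + 8 * sin x)| ≤ 9 from abs_le.mpr ⟨by nlinarith, by nlinarith⟩)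
  have hx2 : x ^ 2 * (-8 * cos y * sin x - 2 * sin y ^ 2 - 1) ≤ x ^ 2 * 8 := by
    gcongr; nlinarith
  have hy2 : y ^ 2 * (-8 * cos y * sin x + 2 * sin x ^ 2 - 3) ≤ y ^ 2 * 7 := by
    gcongr; nlinarith
  have hconst : 16 * cos y * sin x + sin x ^ 2 - sin y ^ 2 ≤ 17 := by nlinarith
  unfold Q
  linarith [sq_nonneg y]

theorem Q_lower_bound :
    ∃ C₀ A R : ℝ, 0 < C₀ ∧ 0 < A ∧ 0 < R ∧
      ∀ C ≤ -C₀, ∀ x y : ℝ, x ^ 2 + y ^ 2 ≥ R ^ 2 →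
        |Q C x y| ≥ A * (x ^ 2 + y ^ 2) ^ 2 := by
  -- For `s = x² + y² ≥ 400`: `-(9/20) s² + 57 s ≤ -s² / 4`, and `180 + 4C ≤ 0` once `C ≤ -45`.
  refine ⟨45, 1 / 4, 20, by norm_num, by norm_num, by norm_num, fun C hC x y hR => ?_⟩
  have hquartic : (x ^ 2 + y ^ 2) ^ 2 ≤ 2 * (x ^ 4 + y ^ 4) := by
    nlinarith [sq_nonneg (x ^ 2 - y ^ 2)]
  have hs : 400 ≤ x ^ 2 + y ^ 2 := by norm_num at hR; exact hR
  have hQ : Q C x y ≤ -(1 / 4) * (x ^ 2 + y ^ 2) ^ 2 := by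
    nlinarith [Q_le C x y]
  linarith [neg_le_abs (Q C x y)]
end

section
/- Under the hypotheses of the double Moutard iteration (U, ω₁ > 0, ω₂ smooth solutions of (−Δ+U)φ = 0 on simply connected Ω ⊆ ℝ²; θ₁ > 0 satisfying the Moutard system (ω₁θ₁)_x = −ω₁²(ω₂/ω₁)_y, (ω₁θ₁)_y = ω₁²(ω₂/ω₁)_x), the function ψ₂ = ω₂/(ω₁θ₁) satisfies (−Δ + U − 2Δ log(ω₁θ₁))ψ₂ = 0 on Ω. -/
noncomputable def pdx (f : ℝ → ℝ → ℝ) : ℝ → ℝ → ℝ := fun x y => deriv (fun t => f t y) x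
noncomputable def pdy (f : ℝ → ℝ → ℝ) : ℝ → ℝ → ℝ := fun x y => deriv (fun t => f x t) y
noncomputable def lap (f : ℝ → ℝ → ℝ) : ℝ → ℝ → ℝ :=
  fun x y => pdx (pdx f) x y + pdy (pdy f) x y

open Function

section tools

variable {Ω : Set (ℝ × ℝ)} {f g : ℝ → ℝ → ℝ} {x y : ℝ}

lemma hasDerivAt_sliceX (hf : DifferentiableAt ℝ (uncurry f) (x, y)) :
    HasDerivAt (fun t => f t y) (fderiv ℝ (uncurry f) (x, y) (1, 0)) x := by
  have h1 : HasDerivAt (fun t : ℝ => (t, y)) ((1:ℝ), (0:ℝ)) x :=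
    (hasDerivAt_id x).prodMk (hasDerivAt_const x y)
  exact hf.hasFDerivAt.comp_hasDerivAt x h1

lemma hasDerivAt_sliceY (hf : DifferentiableAt ℝ (uncurry f) (x, y)) :
    HasDerivAt (fun t => f x t) (fderiv ℝ (uncurry f) (x, y) (0, 1)) y := by
  have h1 : HasDerivAt (fun t : ℝ => (x, t)) ((0:ℝ), (1:ℝ)) y :=
    (hasDerivAt_const y x).prodMk (hasDerivAt_id y)
  exact hf.hasFDerivAt.comp_hasDerivAt y h1

lemma hasPdx (hf : DifferentiableAt ℝ (uncurry f) (x, y)) :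
    HasDerivAt (fun t => f t y) (pdx f x y) x := by
  have h := hasDerivAt_sliceX hf
  have h2 : pdx f x y = fderiv ℝ (uncurry f) (x, y) (1, 0) := h.deriv
  rw [h2]; exact h

lemma hasPdy (hf : DifferentiableAt ℝ (uncurry f) (x, y)) :
    HasDerivAt (fun t => f x t) (pdy f x y) y := by
  have h := hasDerivAt_sliceY hf
  have h2 : pdy f x y = fderiv ℝ (uncurry f) (x, y) (0, 1) := h.deriv
  rw [h2]; exact h

lemma diffAt_of_contDiffOn (hΩ : IsOpen Ω) (hf : ContDiffOn ℝ (⊤ : ℕ∞) (uncurry f) Ω)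
    (hxy : (x, y) ∈ Ω) : DifferentiableAt ℝ (uncurry f) (x, y) :=
  ((hf.contDiffAt (hΩ.mem_nhds hxy)).differentiableAt (by norm_num))

lemma pdx_congrOn (hΩ : IsOpen Ω) (h : ∀ a b, (a, b) ∈ Ω → f a b = g a b)
    (hxy : (x, y) ∈ Ω) : pdx f x y = pdx g x y := by
  apply Filter.EventuallyEq.deriv_eq
  have hmem : {t : ℝ | (t, y) ∈ Ω} ∈ nhds x := by
    have : Continuous (fun t : ℝ => (t, y)) := by fun_prop
    exact (hΩ.preimage this).mem_nhds hxy
  filter_upwards [hmem] with t ht using h t y ht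

lemma pdy_congrOn (hΩ : IsOpen Ω) (h : ∀ a b, (a, b) ∈ Ω → f a b = g a b)
    (hxy : (x, y) ∈ Ω) : pdy f x y = pdy g x y := by
  apply Filter.EventuallyEq.deriv_eq
  have hmem : {t : ℝ | (x, t) ∈ Ω} ∈ nhds y := by
    have : Continuous (fun t : ℝ => (x, t)) := by fun_prop
    exact (hΩ.preimage this).mem_nhds hxy
  filter_upwards [hmem] with t ht using h x t ht

lemma smOn_pdx (hΩ : IsOpen Ω) (hf : ContDiffOn ℝ (⊤ : ℕ∞) (uncurry f) Ω) :
    ContDiffOn ℝ (⊤ : ℕ∞) (uncurry (pdx f)) Ω := by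
  have h1 : ContDiffOn ℝ (⊤ : ℕ∞) (fun p : ℝ × ℝ => fderiv ℝ (uncurry f) p (1, 0)) Ω := by
    exact (hf.fderiv_of_isOpen hΩ (by simp)).clm_apply contDiffOn_const
  apply h1.congr
  intro p hp
  have hmem : (p.1, p.2) ∈ Ω := by simpa using hp
  have := (hasDerivAt_sliceX (f := f) (diffAt_of_contDiffOn hΩ hf hmem)).deriv
  simpa [uncurry, pdx] using this

lemma smOn_pdy (hΩ : IsOpen Ω) (hf : ContDiffOn ℝ (⊤ : ℕ∞) (uncurry f) Ω) :
    ContDiffOn ℝ (⊤ : ℕ∞) (uncurry (pdy f)) Ω := by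
  have h1 : ContDiffOn ℝ (⊤ : ℕ∞) (fun p : ℝ × ℝ => fderiv ℝ (uncurry f) p (0, 1)) Ω := by
    exact (hf.fderiv_of_isOpen hΩ (by simp)).clm_apply contDiffOn_const
  apply h1.congr
  intro p hp
  have hmem : (p.1, p.2) ∈ Ω := by simpa using hp
  have := (hasDerivAt_sliceY (f := f) (diffAt_of_contDiffOn hΩ hf hmem)).deriv
  simpa [uncurry, pdy] using this

lemma pdx_pdy_symm (hΩ : IsOpen Ω) (hf : ContDiffOn ℝ (⊤ : ℕ∞) (uncurry f) Ω)
    (hxy : (x, y) ∈ Ω) : pdx (pdy f) x y = pdy (pdx f) x y := by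
  set F := uncurry f with hF
  have hca : ContDiffAt ℝ (⊤ : ℕ∞) F (x, y) := hf.contDiffAt (hΩ.mem_nhds hxy)
  have hsymm : IsSymmSndFDerivAt ℝ F (x, y) := hca.isSymmSndFDerivAt (by rw [minSmoothness_of_isRCLikeNormedField]; exact WithTop.coe_le_coe.mpr (le_top : (2:ℕ∞) ≤ ⊤))
  have hdf : DifferentiableAt ℝ (fderiv ℝ F) (x, y) :=
    (hca.fderiv_right (m := (⊤ : ℕ∞)) (by simp)).differentiableAt (by simp)
  have hx1 : HasDerivAt (fun t : ℝ => fderiv ℝ F (t, y)) (fderiv ℝ (fderiv ℝ F) (x, y) (1, 0)) x := by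
    have h1 : HasDerivAt (fun t : ℝ => (t, y)) ((1:ℝ), (0:ℝ)) x :=
      (hasDerivAt_id x).prodMk (hasDerivAt_const x y)
    exact hdf.hasFDerivAt.comp_hasDerivAt x h1
  have hx2 : HasDerivAt (fun t : ℝ => fderiv ℝ F (t, y) (0, 1))
      (fderiv ℝ (fderiv ℝ F) (x, y) (1, 0) (0, 1)) x := by
    simpa using hx1.clm_apply (hasDerivAt_const x ((0:ℝ), (1:ℝ)))
  have hmemx : {t : ℝ | (t, y) ∈ Ω} ∈ nhds x := by
    have : Continuous (fun t : ℝ => (t, y)) := by fun_prop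
    exact (hΩ.preimage this).mem_nhds hxy
  have e1 : pdx (pdy f) x y = fderiv ℝ (fderiv ℝ F) (x, y) (1, 0) (0, 1) := by
    rw [show pdx (pdy f) x y = deriv (fun t => pdy f t y) x from rfl]
    rw [← hx2.deriv]
    apply Filter.EventuallyEq.deriv_eq
    filter_upwards [hmemx] with t ht
    exact (hasDerivAt_sliceY (diffAt_of_contDiffOn hΩ hf ht)).deriv
  have hy1 : HasDerivAt (fun t : ℝ => fderiv ℝ F (x, t)) (fderiv ℝ (fderiv ℝ F) (x, y) (0, 1)) y := by
    have h1 : HasDerivAt (fun t : ℝ => (x, t)) ((0:ℝ), (1:ℝ)) y :=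
      (hasDerivAt_const y x).prodMk (hasDerivAt_id y)
    exact hdf.hasFDerivAt.comp_hasDerivAt y h1
  have hy2 : HasDerivAt (fun t : ℝ => fderiv ℝ F (x, t) (1, 0))
      (fderiv ℝ (fderiv ℝ F) (x, y) (0, 1) (1, 0)) y := by
    simpa using hy1.clm_apply (hasDerivAt_const y ((1:ℝ), (0:ℝ)))
  have hmemy : {t : ℝ | (x, t) ∈ Ω} ∈ nhds y := by
    have : Continuous (fun t : ℝ => (x, t)) := by fun_prop
    exact (hΩ.preimage this).mem_nhds hxy
  have e2 : pdy (pdx f) x y = fderiv ℝ (fderiv ℝ F) (x, y) (0, 1) (1, 0) := by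
    rw [show pdy (pdx f) x y = deriv (fun t => pdx f x t) y from rfl]
    rw [← hy2.deriv]
    apply Filter.EventuallyEq.deriv_eq
    filter_upwards [hmemy] with t ht
    exact (hasDerivAt_sliceX (diffAt_of_contDiffOn hΩ hf ht)).deriv
  rw [e1, e2, hsymm (0, 1) (1, 0)]

end tools

theorem double_moutard_psi2
    (Ω : Set (ℝ × ℝ)) (hΩ : IsOpen Ω) (hsc : SimplyConnectedSpace Ω)
    (U ω₁ ω₂ θ₁ : ℝ → ℝ → ℝ)
    (hU : ContDiffOn ℝ (⊤ : ℕ∞) (Function.uncurry U) Ω)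
    (hω₁ : ContDiffOn ℝ (⊤ : ℕ∞) (Function.uncurry ω₁) Ω)
    (hω₂ : ContDiffOn ℝ (⊤ : ℕ∞) (Function.uncurry ω₂) Ω)
    (hθ₁ : ContDiffOn ℝ (⊤ : ℕ∞) (Function.uncurry θ₁) Ω)
    (hω₁pos : ∀ x y, (x, y) ∈ Ω → 0 < ω₁ x y)
    (hθ₁pos : ∀ x y, (x, y) ∈ Ω → 0 < θ₁ x y)
    (hω₁eq : ∀ x y, (x, y) ∈ Ω → -(lap ω₁ x y) + U x y * ω₁ x y = 0)
    (hω₂eq : ∀ x y, (x, y) ∈ Ω → -(lap ω₂ x y) + U x y * ω₂ x y = 0)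
    (hsys1 : ∀ x y, (x, y) ∈ Ω →
      pdx (fun a b => ω₁ a b * θ₁ a b) x y =
        -(ω₁ x y) ^ 2 * pdy (fun s t => ω₂ s t / ω₁ s t) x y)
    (hsys2 : ∀ x y, (x, y) ∈ Ω →
      pdy (fun a b => ω₁ a b * θ₁ a b) x y =
        (ω₁ x y) ^ 2 * pdx (fun s t => ω₂ s t / ω₁ s t) x y) :
    ∀ x y, (x, y) ∈ Ω →
      -(lap (fun a b => ω₂ a b / (ω₁ a b * θ₁ a b)) x y) +
        (U x y - 2 * lap (fun a b => Real.log (ω₁ a b * θ₁ a b)) x y) *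
          (ω₂ x y / (ω₁ x y * θ₁ x y)) = 0 := by
  intro x y hxy
  set W : ℝ → ℝ → ℝ := fun a b => ω₁ a b * θ₁ a b with hWdef
  set V : ℝ → ℝ → ℝ := fun a b => ω₂ a b / ω₁ a b with hVdef
  set P : ℝ → ℝ → ℝ := fun a b => ω₂ a b / (ω₁ a b * θ₁ a b) with hPdef
  set L : ℝ → ℝ → ℝ := fun a b => Real.log (ω₁ a b * θ₁ a b) with hLdef
  -- nonvanishing
  have hane : ∀ a b, (a, b) ∈ Ω → ω₁ a b ≠ 0 := fun a b h => (hω₁pos a b h).ne'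
  have hWpos : ∀ a b, (a, b) ∈ Ω → 0 < W a b := fun a b h =>
    mul_pos (hω₁pos a b h) (hθ₁pos a b h)
  have hWne : ∀ a b, (a, b) ∈ Ω → W a b ≠ 0 := fun a b h => (hWpos a b h).ne'
  -- smoothness
  have hWs : ContDiffOn ℝ (⊤ : ℕ∞) (uncurry W) Ω := hω₁.mul hθ₁
  have hVs : ContDiffOn ℝ (⊤ : ℕ∞) (uncurry V) Ω :=
    hω₂.div hω₁ (fun p hp => hane p.1 p.2 (by simpa using hp))
  have hPs : ContDiffOn ℝ (⊤ : ℕ∞) (uncurry P) Ω :=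
    hω₂.div hWs (fun p hp => hWne p.1 p.2 (by simpa using hp))
  have hLs : ContDiffOn ℝ (⊤ : ℕ∞) (uncurry L) Ω :=
    hWs.log (fun p hp => hWne p.1 p.2 (by simpa using hp))
  have hWxs := smOn_pdx hΩ hWs
  have hWys := smOn_pdy hΩ hWs
  have hPxs := smOn_pdx hΩ hPs
  have hPys := smOn_pdy hΩ hPs
  have hLxs := smOn_pdx hΩ hLs
  have hLys := smOn_pdy hΩ hLs
  have hVxs := smOn_pdx hΩ hVs
  have hVys := smOn_pdy hΩ hVs
  have hsqs : ContDiffOn ℝ (⊤ : ℕ∞) (uncurry fun s t => -(ω₁ s t) ^ 2) Ω := (hω₁.pow 2).neg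
  -- pointwise algebraic identities on Ω
  have hPW : ∀ a b, (a, b) ∈ Ω → ω₂ a b = P a b * W a b := by
    intro a b h
    simp only [hPdef, hWdef]
    field_simp [(hω₁pos a b h).ne', (hθ₁pos a b h).ne']
  have hVW : ∀ a b, (a, b) ∈ Ω → ω₂ a b = V a b * ω₁ a b := by
    intro a b h
    simp only [hVdef]
    field_simp [hane a b h]
  -- first-derivative identities on Ω
  have id1x : ∀ a b, (a, b) ∈ Ω →
      pdx ω₂ a b = pdx P a b * W a b + P a b * pdx W a b := by
    intro a b h
    rw [pdx_congrOn hΩ hPW h]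
    exact ((hasPdx (diffAt_of_contDiffOn hΩ hPs h)).mul
      (hasPdx (diffAt_of_contDiffOn hΩ hWs h))).deriv
  have id1y : ∀ a b, (a, b) ∈ Ω →
      pdy ω₂ a b = pdy P a b * W a b + P a b * pdy W a b := by
    intro a b h
    rw [pdy_congrOn hΩ hPW h]
    exact ((hasPdy (diffAt_of_contDiffOn hΩ hPs h)).mul
      (hasPdy (diffAt_of_contDiffOn hΩ hWs h))).deriv
  have id2x : ∀ a b, (a, b) ∈ Ω → pdx W a b = pdx L a b * W a b := by
    intro a b h
    have hli : HasDerivAt (fun t => Real.log (W t b)) (pdx W a b / W a b) a :=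
      (hasPdx (diffAt_of_contDiffOn hΩ hWs h)).log (hWne a b h)
    have h2 : pdx L a b = pdx W a b / W a b := hli.deriv
    rw [h2]
    exact (div_mul_cancel₀ _ (hWne a b h)).symm
  have id2y : ∀ a b, (a, b) ∈ Ω → pdy W a b = pdy L a b * W a b := by
    intro a b h
    have hli : HasDerivAt (fun t => Real.log (W a t)) (pdy W a b / W a b) b :=
      (hasPdy (diffAt_of_contDiffOn hΩ hWs h)).log (hWne a b h)
    have h2 : pdy L a b = pdy W a b / W a b := hli.deriv
    rw [h2]
    exact (div_mul_cancel₀ _ (hWne a b h)).symm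
  have id4x : ∀ a b, (a, b) ∈ Ω →
      pdx ω₂ a b = pdx V a b * ω₁ a b + V a b * pdx ω₁ a b := by
    intro a b h
    rw [pdx_congrOn hΩ hVW h]
    exact ((hasPdx (diffAt_of_contDiffOn hΩ hVs h)).mul
      (hasPdx (diffAt_of_contDiffOn hΩ hω₁ h))).deriv
  have id4y : ∀ a b, (a, b) ∈ Ω →
      pdy ω₂ a b = pdy V a b * ω₁ a b + V a b * pdy ω₁ a b := by
    intro a b h
    rw [pdy_congrOn hΩ hVW h]
    exact ((hasPdy (diffAt_of_contDiffOn hΩ hVs h)).mul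
      (hasPdy (diffAt_of_contDiffOn hΩ hω₁ h))).deriv
  -- second-derivative identities at the point
  have hE1 : pdx (pdx ω₂) x y =
      pdx (pdx P) x y * W x y + pdx P x y * pdx W x y +
        (pdx P x y * pdx W x y + P x y * pdx (pdx W) x y) := by
    rw [pdx_congrOn hΩ id1x hxy]
    exact (((hasPdx (diffAt_of_contDiffOn hΩ hPxs hxy)).mul
        (hasPdx (diffAt_of_contDiffOn hΩ hWs hxy))).add
      ((hasPdx (diffAt_of_contDiffOn hΩ hPs hxy)).mul
        (hasPdx (diffAt_of_contDiffOn hΩ hWxs hxy)))).deriv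
  have hE2 : pdy (pdy ω₂) x y =
      pdy (pdy P) x y * W x y + pdy P x y * pdy W x y +
        (pdy P x y * pdy W x y + P x y * pdy (pdy W) x y) := by
    rw [pdy_congrOn hΩ id1y hxy]
    exact (((hasPdy (diffAt_of_contDiffOn hΩ hPys hxy)).mul
        (hasPdy (diffAt_of_contDiffOn hΩ hWs hxy))).add
      ((hasPdy (diffAt_of_contDiffOn hΩ hPs hxy)).mul
        (hasPdy (diffAt_of_contDiffOn hΩ hWys hxy)))).deriv
  have hE3 : pdx (pdx W) x y =
      pdx (pdx L) x y * W x y + pdx L x y * pdx W x y := by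
    rw [pdx_congrOn hΩ id2x hxy]
    exact ((hasPdx (diffAt_of_contDiffOn hΩ hLxs hxy)).mul
      (hasPdx (diffAt_of_contDiffOn hΩ hWs hxy))).deriv
  have hE4 : pdy (pdy W) x y =
      pdy (pdy L) x y * W x y + pdy L x y * pdy W x y := by
    rw [pdy_congrOn hΩ id2y hxy]
    exact ((hasPdy (diffAt_of_contDiffOn hΩ hLys hxy)).mul
      (hasPdy (diffAt_of_contDiffOn hΩ hWs hxy))).deriv
  -- Moutard second derivatives
  have hsq_x : pdx (fun s t => -(ω₁ s t) ^ 2) x y =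
      -((2 : ℝ) * ω₁ x y ^ 1 * pdx ω₁ x y) :=
    (((hasPdx (diffAt_of_contDiffOn hΩ hω₁ hxy)).pow 2).neg).deriv
  have hsq2_y : pdy (fun s t => (ω₁ s t) ^ 2) x y =
      (2 : ℝ) * ω₁ x y ^ 1 * pdy ω₁ x y :=
    ((hasPdy (diffAt_of_contDiffOn hΩ hω₁ hxy)).pow 2).deriv
  have hsq2s : ContDiffOn ℝ (⊤ : ℕ∞) (uncurry fun s t => (ω₁ s t) ^ 2) Ω := hω₁.pow 2
  have hE5 : pdx (pdx W) x y =
      pdx (fun s t => -(ω₁ s t) ^ 2) x y * pdy V x y +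
        -(ω₁ x y) ^ 2 * pdx (pdy V) x y := by
    rw [pdx_congrOn hΩ hsys1 hxy]
    exact ((hasPdx (diffAt_of_contDiffOn hΩ hsqs hxy)).mul
      (hasPdx (diffAt_of_contDiffOn hΩ hVys hxy))).deriv
  have hE6 : pdy (pdy W) x y =
      pdy (fun s t => (ω₁ s t) ^ 2) x y * pdx V x y +
        (ω₁ x y) ^ 2 * pdy (pdx V) x y := by
    rw [pdy_congrOn hΩ hsys2 hxy]
    exact ((hasPdy (diffAt_of_contDiffOn hΩ hsq2s hxy)).mul
      (hasPdy (diffAt_of_contDiffOn hΩ hVxs hxy))).deriv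
  rw [hsq_x] at hE5
  rw [hsq2_y] at hE6
  have hE7 : pdx (pdy V) x y = pdy (pdx V) x y := pdx_pdy_symm hΩ hVs hxy
  -- the equation for ω₂
  have hE8 : pdx (pdx ω₂) x y + pdy (pdy ω₂) x y = U x y * ω₂ x y := by
    have h := hω₂eq x y hxy
    simp only [lap] at h
    linarith
  -- key identity : ω₂ ΔW = 2 ∇ω₂ · ∇W
  have hb : ω₂ x y = V x y * ω₁ x y := hVW x y hxy
  have hkey : ω₂ x y * (pdx (pdx W) x y + pdy (pdy W) x y) =
      2 * (pdx ω₂ x y * pdx W x y + pdy ω₂ x y * pdy W x y) := by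
    rw [hE5, hE6, hE7, id4x x y hxy, id4y x y hxy, hsys1 x y hxy, hsys2 x y hxy, hb]
    ring
  -- assemble
  have hA : U x y * ω₂ x y =
      (pdx (pdx P) x y + pdy (pdy P) x y) * W x y +
        2 * (pdx P x y * pdx W x y + pdy P x y * pdy W x y) +
        P x y * (pdx (pdx W) x y + pdy (pdy W) x y) := by
    linear_combination hE1 + hE2 - hE8
  have hB : (pdx (pdx W) x y + pdy (pdy W) x y) * W x y =
      (pdx (pdx L) x y + pdy (pdy L) x y) * W x y ^ 2 +
        pdx W x y ^ 2 + pdy W x y ^ 2 := by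
    linear_combination W x y * hE3 + W x y * hE4 - pdx W x y * id2x x y hxy -
      pdy W x y * id2y x y hxy
  have hPW0 : P x y * W x y = ω₂ x y := (hPW x y hxy).symm
  have hE9 := id1x x y hxy
  have hE10 := id1y x y hxy
  -- final computation
  rw [show ω₂ x y / (ω₁ x y * θ₁ x y) = P x y from rfl]
  simp only [lap]
  clear_value W V P L
  have hWne0 : W x y ≠ 0 := hWne x y hxy
  have main : (-(pdx (pdx P) x y + pdy (pdy P) x y) +
      (U x y - 2 * (pdx (pdx L) x y + pdy (pdy L) x y)) * P x y) * W x y ^ 2 = 0 := by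
    linear_combination (W x y) * hA +
      (U x y * W x y - (pdx (pdx W) x y + pdy (pdy W) x y)) * hPW0 +
      (2 * P x y) * hB + (-2 * pdx W x y) * hE9 + (-2 * pdy W x y) * hE10 + (-1 : ℝ) * hkey
  exact (mul_eq_zero.mp main).resolve_right (pow_ne_zero 2 hWne0)
end
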